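/- For n ≥ 1 one has the equalities of R-submodules of Ŷ_{r,n}: Y_{r,n−1} f_n Y_{r,n} = f_n Y_{r,n} and Y_{r,n−1} h_n Y_{r,n} = h_n Y_{r,n}, where Y_{r,n−1} is the subalgebra generated by t_1, …, t_{n−1}, g_1, …, g_{n−2}. -/
import Mathlib

noncomputable section

namespace YH

/-- Generators of the affine Yokonuma–Hecke algebra `Ŷ_{r,n}`:
`t 1, …, t n`, `g 1, …, g (n-1)`, `X₁` and `X₁⁻¹`. -/
inductive Gen (n : ℕ) : Type
  | t (i : Fin n) : Gen n
  | g (i : Fin (n - 1)) : Gen n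
  | X : Gen n
  | Xinv : Gen n

variable (r n d : ℕ) (R : Type) [CommRing R] [Invertible (r : R)] (q : Rˣ) (v : ℕ → Rˣ)

/-- The free `R`-algebra on the generators. -/
abbrev F : Type := FreeAlgebra R (Gen n)

/-- The generator `t_i` (1-based index, junk value 1 out of range). -/
def tF (i : ℕ) : F n R :=
  if h : 1 ≤ i ∧ i ≤ n then FreeAlgebra.ι R (Gen.t ⟨i - 1, by omega⟩) else 1

/-- The generator `g_i` (1-based index, junk value 1 out of range). -/
def gF (i : ℕ) : F n R :=
  if h : 1 ≤ i ∧ i ≤ n - 1 then FreeAlgebra.ι R (Gen.g ⟨i - 1, by omega⟩) else 1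

/-- The generator `X₁`. -/
def XF : F n R := FreeAlgebra.ι R Gen.X

/-- The generator `X₁⁻¹`. -/
def XinvF : F n R := FreeAlgebra.ι R Gen.Xinv

/-- `e_i = (1/r) ∑_{s=0}^{r-1} t_i^s t_{i+1}^{-s}` (using `t^r = 1`,
`t^{-s}` is represented by `t^{r-s}`). -/
def eF (i : ℕ) : F n R :=
  ⅟(r : R) • ∑ s ∈ Finset.range r, tF n R i ^ s * tF n R (i + 1) ^ (r - s)

/-- The scalar `q - q⁻¹`. -/
def qd : R := (q : R) - ((q⁻¹ : Rˣ) : R)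

/-- The defining relations of the affine Yokonuma–Hecke algebra `Ŷ_{r,n}`. -/
inductive Rel : F n R → F n R → Prop
  | gg {i j : ℕ} (h1 : 1 ≤ i) (h2 : i + 2 ≤ j) (h3 : j ≤ n - 1) :
      Rel (gF n R i * gF n R j) (gF n R j * gF n R i)
  | braid {i : ℕ} (h1 : 1 ≤ i) (h2 : i + 1 ≤ n - 1) :
      Rel (gF n R i * gF n R (i + 1) * gF n R i)
        (gF n R (i + 1) * gF n R i * gF n R (i + 1))
  | tt {i j : ℕ} (h1 : 1 ≤ i) (h2 : i ≤ n) (h3 : 1 ≤ j) (h4 : j ≤ n) :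
      Rel (tF n R i * tF n R j) (tF n R j * tF n R i)
  | gt {i j : ℕ} (h1 : 1 ≤ i) (h2 : i ≤ n - 1) (h3 : 1 ≤ j) (h4 : j ≤ n) :
      Rel (gF n R i * tF n R j)
        (tF n R (if j = i then i + 1 else if j = i + 1 then i else j) * gF n R i)
  | tpow {i : ℕ} (h1 : 1 ≤ i) (h2 : i ≤ n) : Rel (tF n R i ^ r) 1
  | gsq {i : ℕ} (h1 : 1 ≤ i) (h2 : i ≤ n - 1) :
      Rel (gF n R i ^ 2) (1 + qd R q • (eF r n R i * gF n R i))
  | XXinv : Rel (XF n R * XinvF n R) 1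
  | XinvX : Rel (XinvF n R * XF n R) 1
  | gXgX : Rel (gF n R 1 * XF n R * gF n R 1 * XF n R)
      (XF n R * gF n R 1 * XF n R * gF n R 1)
  | gX {i : ℕ} (h1 : 2 ≤ i) (h2 : i ≤ n - 1) : Rel (gF n R i * XF n R) (XF n R * gF n R i)
  | tX {j : ℕ} (h1 : 1 ≤ j) (h2 : j ≤ n) : Rel (tF n R j * XF n R) (XF n R * tF n R j)

/-- The affine Yokonuma–Hecke algebra `Ŷ_{r,n}`, presented by generators and relations. -/
abbrev AYH : Type := RingQuot (Rel r n R q)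

/-- The canonical projection from the free algebra onto `Ŷ_{r,n}`. -/
def mkA : F n R →ₐ[R] AYH r n R q := RingQuot.mkAlgHom R (Rel r n R q)

/-- The element `t_i` of `Ŷ_{r,n}`. -/
def tA (i : ℕ) : AYH r n R q := mkA r n R q (tF n R i)

/-- The element `g_i` of `Ŷ_{r,n}`. -/
def gA (i : ℕ) : AYH r n R q := mkA r n R q (gF n R i)

/-- The element `e_i` of `Ŷ_{r,n}`. -/
def eA (i : ℕ) : AYH r n R q := mkA r n R q (eF r n R i)

/-- The idempotent `e_{i,k} = (1/r) ∑_{s=0}^{r-1} t_i^s t_k^{-s}` of `Ŷ_{r,n}`. -/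
def eijA (i k : ℕ) : AYH r n R q :=
  ⅟(r : R) • ∑ s ∈ Finset.range r, tA r n R q i ^ s * tA r n R q k ^ (r - s)

/-- `g_i⁻¹ = g_i - (q - q⁻¹) e_i`. -/
def ginvA (i : ℕ) : AYH r n R q := gA r n R q i - qd R q • eA r n R q i

/-- The elements `X_i`, defined by `X_{i+1} = g_i X_i g_i` (1-based; `X 0` is junk). -/
def XA : ℕ → AYH r n R q
  | 0 => 1
  | 1 => mkA r n R q (XF n R)
  | i + 2 => gA r n R q (i + 1) * XA (i + 1) * gA r n R q (i + 1)

/-- The elements `X_i⁻¹`, defined by `X_{i+1}⁻¹ = g_i⁻¹ X_i⁻¹ g_i⁻¹`. -/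
def XAinv : ℕ → AYH r n R q
  | 0 => 1
  | 1 => mkA r n R q (XinvF n R)
  | i + 2 => ginvA r n R q (i + 1) * XAinv (i + 1) * ginvA r n R q (i + 1)

/-- `f_1 = (X_1 - v_1) ⋯ (X_1 - v_d)`. -/
def f1A : AYH r n R q :=
  ((List.range d).map fun l => XA r n R q 1 - algebraMap R (AYH r n R q) ((v l : R))).prod

/-- The elements `f_i`, defined by `f_{i+1} = g_i f_i g_i`. -/
def fA : ℕ → AYH r n R q
  | 0 => 1
  | 1 => f1A r n d R q v
  | i + 2 => gA r n R q (i + 1) * fA (i + 1) * gA r n R q (i + 1)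

/-- The elements `h_i`, defined by `h_1 = f_1`, `h_{i+1} = g_i h_i g_i⁻¹`. -/
def hA : ℕ → AYH r n R q
  | 0 => 1
  | 1 => f1A r n d R q v
  | i + 2 => gA r n R q (i + 1) * hA (i + 1) * ginvA r n R q (i + 1)

/-- The constant term `a_d = (-1)^d v_1 ⋯ v_d` of `f_1`. -/
def adC : R := (-1) ^ d * ((List.range d).map fun l => ((v l : R))).prod

/-- The Yokonuma–Hecke subalgebra `Y_{r,m} ⊆ Ŷ_{r,n}`, generated by
`t_1, …, t_m, g_1, …, g_{m-1}`. -/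
def Ysub (m : ℕ) : Subalgebra R (AYH r n R q) :=
  Algebra.adjoin R
    ({x | ∃ i, 1 ≤ i ∧ i ≤ m ∧ x = tA r n R q i} ∪
     {x | ∃ i, 1 ≤ i ∧ i ≤ m - 1 ∧ x = gA r n R q i})

/-- The Laurent polynomial subalgebra `P_m = R[X_1^{±1},…,X_m^{±1}] ⊆ Ŷ_{r,n}`. -/
def Psub (m : ℕ) : Subalgebra R (AYH r n R q) :=
  Algebra.adjoin R
    {x | ∃ i, 1 ≤ i ∧ i ≤ m ∧ (x = XA r n R q i ∨ x = XAinv r n R q i)}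

/-- The power `X_i^a` for an integer `a`. -/
def XzA (i : ℕ) (a : ℤ) : AYH r n R q :=
  if 0 ≤ a then XA r n R q i ^ a.toNat else XAinv r n R q i ^ (-a).toNat

/-- The monomial `X^α = X_1^{α_1} ⋯ X_n^{α_n}` for `α ∈ ℤ^n`. -/
def XmonA (α : Fin n → ℤ) : AYH r n R q :=
  (List.ofFn fun j : Fin n => XzA r n R q ((j : ℕ) + 1) (α j)).prod

/-- The element `P_Z = P_{z_1} ⋯ P_{z_k}` (`z_1 < ⋯ < z_k` the elements of `Z`),
where `P_z = f_z` if `α_z ≥ 0` and `P_z = h_z` if `α_z < 0`. -/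
def PZA (α : Fin n → ℤ) (Z : Finset (Fin n)) : AYH r n R q :=
  ((Z.sort (· ≤ ·)).map fun z =>
    if 0 ≤ α z then fA r n d R q v ((z : ℕ) + 1) else hA r n d R q v ((z : ℕ) + 1)).prod

/-- The index set `Π_n`: pairs `(α, Z)` with `Z ⊆ {1,…,n}`, `α ∈ ℤ^n` and
`0 ≤ α_i < d` whenever `i ∉ Z`. -/
def Pin : Type :=
  {p : (Fin n → ℤ) × Finset (Fin n) // ∀ i, i ∉ p.2 → 0 ≤ p.1 i ∧ p.1 i < d}

/-- The polynomial `f_1 = (X_1 - v_1) ⋯ (X_1 - v_d)` in the free algebra. -/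
def f1F : F n R :=
  ((List.range d).map fun l => XF n R - algebraMap R (F n R) ((v l : R))).prod

/-- The defining relations of the cyclotomic Yokonuma–Hecke algebra `Y_{r,n}^d`:
the relations of `Ŷ_{r,n}` together with the cyclotomic relation `f_1 = 0`.
The resulting quotient is `Ŷ_{r,n}/J_d`, where `J_d` is the two-sided ideal of
`Ŷ_{r,n}` generated by `f_1`. -/
inductive CRel : F n R → F n R → Prop
  | base {a b : F n R} : Rel r n R q a b → CRel a b
  | cyc : CRel (f1F n d R v) 0

/-- The cyclotomic Yokonuma–Hecke algebra `Y_{r,n}^d = Ŷ_{r,n}/J_d`. -/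
abbrev CYH : Type := RingQuot (CRel r n d R q v)

/-- The canonical projection of the free algebra onto `Y_{r,n}^d`. -/
def mkC : F n R →ₐ[R] CYH r n d R q v := RingQuot.mkAlgHom R (CRel r n d R q v)

/-- The image of `t_i` in `Y_{r,n}^d`. -/
def tC (i : ℕ) : CYH r n d R q v := mkC r n d R q v (tF n R i)

/-- The image of `g_i` in `Y_{r,n}^d`. -/
def gC (i : ℕ) : CYH r n d R q v := mkC r n d R q v (gF n R i)

/-- The image of `e_i` in `Y_{r,n}^d`. -/
def eC (i : ℕ) : CYH r n d R q v := mkC r n d R q v (eF r n R i)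

/-- The idempotent `e_{i,k} = (1/r) ∑_{s=0}^{r-1} t_i^s t_k^{-s}` in `Y_{r,n}^d`. -/
def eijC (i k : ℕ) : CYH r n d R q v :=
  ⅟(r : R) • ∑ s ∈ Finset.range r, tC r n d R q v i ^ s * tC r n d R q v k ^ (r - s)

/-- The element `g_i⁻¹ = g_i - (q - q⁻¹) e_i` in `Y_{r,n}^d`. -/
def ginvC (i : ℕ) : CYH r n d R q v := gC r n d R q v i - qd R q • eC r n d R q v i

/-- The elements `X_i` of `Y_{r,n}^d`, with `X_{i+1} = g_i X_i g_i`. -/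
def XC : ℕ → CYH r n d R q v
  | 0 => 1
  | 1 => mkC r n d R q v (XF n R)
  | i + 2 => gC r n d R q v (i + 1) * XC (i + 1) * gC r n d R q v (i + 1)

/-- The elements `X_i⁻¹` of `Y_{r,n}^d`. -/
def XCinv : ℕ → CYH r n d R q v
  | 0 => 1
  | 1 => mkC r n d R q v (XinvF n R)
  | i + 2 => ginvC r n d R q v (i + 1) * XCinv (i + 1) * ginvC r n d R q v (i + 1)

/-- Swap the entries at positions `i` and `i+1` of a list. -/
def swapAt (L : List ℕ) (i : ℕ) : List ℕ :=
  (L.set i (L.getD (i + 1) 0)).set (i + 1) (L.getD i 0)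

/-- Bubble-sort word: the list of (1-based) positions of the adjacent transpositions
performed when sorting `L`, repeatedly swapping the first adjacent descent. -/
def sortWord : ℕ → List ℕ → List ℕ
  | 0, _ => []
  | fuel + 1, L =>
    match (List.range (L.length - 1)).find? (fun i => L.getD (i + 1) 0 < L.getD i 0) with
    | none => []
    | some i => (i + 1) :: sortWord fuel (swapAt L i)

/-- A canonical reduced word for a permutation `w`, obtained by bubble-sorting its
one-line notation. -/
def permWord (w : Equiv.Perm (Fin n)) : List ℕ :=
  sortWord (n * n) (List.ofFn fun i => ((w i : Fin n) : ℕ))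

/-- The length `l(w)` of a permutation: its number of inversions. -/
def len (w : Equiv.Perm (Fin n)) : ℕ :=
  (Finset.univ.filter fun p : Fin n × Fin n => p.1 < p.2 ∧ w p.2 < w p.1).card

/-- The element `g_w` of `Ŷ_{r,n}` attached to a permutation `w ∈ S_n`
(product of the `g_i` along a reduced word for `w`). -/
def gwA (w : Equiv.Perm (Fin n)) : AYH r n R q :=
  ((permWord n w).map fun i => gA r n R q i).prod

/-- The element `g_w` of `Y_{r,n}^d`. -/
def gwC (w : Equiv.Perm (Fin n)) : CYH r n d R q v :=
  ((permWord n w).map fun i => gC r n d R q v i).prod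

/-- The monomial `t^β = t_1^{β_1} ⋯ t_n^{β_n}` in `Y_{r,n}^d`. -/
def tmonC (β : Fin n → ℕ) : CYH r n d R q v :=
  (List.ofFn fun i : Fin n => tC r n d R q v ((i : ℕ) + 1) ^ β i).prod

/-- The monomial `X^α = X_1^{α_1} ⋯ X_n^{α_n}` (natural exponents) in `Y_{r,n}^d`. -/
def XmonNC (α : Fin n → ℕ) : CYH r n d R q v :=
  (List.ofFn fun i : Fin n => XC r n d R q v ((i : ℕ) + 1) ^ α i).prod

/-- The subalgebra `Y_{r,m}^d` of `Y_{r,n}^d` (the image of `Y_{r,m}^d` under the canonical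
inclusion), generated by `t_1,…,t_m, g_1,…,g_{m-1}, X_1^{±1}`. -/
def YsubC (m : ℕ) : Subalgebra R (CYH r n d R q v) :=
  Algebra.adjoin R
    ({x | ∃ i, 1 ≤ i ∧ i ≤ m ∧ x = tC r n d R q v i} ∪
     {x | ∃ i, 1 ≤ i ∧ i ≤ m - 1 ∧ x = gC r n d R q v i} ∪
     {XC r n d R q v 1, XCinv r n d R q v 1})

end YH
namespace YH

variable (r n d : ℕ) (R : Type) [CommRing R] [Invertible (r : R)] (q : Rˣ) (v : ℕ → Rˣ)

lemma rel_eq {a b : F n R} (h : Rel r n R q a b) : mkA r n R q a = mkA r n R q b :=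
  RingQuot.mkAlgHom_rel R h

/-- The transposition `s_i` acting on indices. -/
def sig (i j : ℕ) : ℕ := if j = i then i + 1 else if j = i + 1 then i else j

lemma sig_sig (i j : ℕ) : sig i (sig i j) = j := by
  unfold sig; split_ifs <;> omega

lemma sig_bounds {i j : ℕ} (h1 : 1 ≤ i) (h2 : i ≤ n - 1) (h3 : 1 ≤ j) (h4 : j ≤ n) :
    1 ≤ sig i j ∧ sig i j ≤ n := by
  unfold sig; split_ifs <;> omega

lemma gtA {i j : ℕ} (h1 : 1 ≤ i) (h2 : i ≤ n - 1) (h3 : 1 ≤ j) (h4 : j ≤ n) :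
    gA r n R q i * tA r n R q j = tA r n R q (sig i j) * gA r n R q i := by
  simpa only [map_mul, tA, gA, sig] using rel_eq r n R q (Rel.gt h1 h2 h3 h4)

lemma tgA {i j : ℕ} (h1 : 1 ≤ i) (h2 : i ≤ n - 1) (h3 : 1 ≤ j) (h4 : j ≤ n) :
    tA r n R q j * gA r n R q i = gA r n R q i * tA r n R q (sig i j) := by
  obtain ⟨hb1, hb2⟩ := sig_bounds (n := n) h1 h2 h3 h4
  have h := gtA r n R q h1 h2 hb1 hb2
  rw [sig_sig] at h
  exact h.symm

lemma ttA {i j : ℕ} (h1 : 1 ≤ i) (h2 : i ≤ n) (h3 : 1 ≤ j) (h4 : j ≤ n) :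
    tA r n R q i * tA r n R q j = tA r n R q j * tA r n R q i := by
  simpa only [map_mul, tA] using rel_eq r n R q (Rel.tt h1 h2 h3 h4)

lemma tpowA {i : ℕ} (h1 : 1 ≤ i) (h2 : i ≤ n) : tA r n R q i ^ r = 1 := by
  simpa only [map_pow, map_one, tA] using rel_eq r n R q (Rel.tpow h1 h2)

lemma g_tpow {i j : ℕ} (h1 : 1 ≤ i) (h2 : i ≤ n - 1) (h3 : 1 ≤ j) (h4 : j ≤ n) (s : ℕ) :
    gA r n R q i * tA r n R q j ^ s = tA r n R q (sig i j) ^ s * gA r n R q i := by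
  induction s with
  | zero => simp
  | succ m ih =>
    rw [pow_succ, ← mul_assoc, ih, mul_assoc, gtA r n R q h1 h2 h3 h4, ← mul_assoc, ← pow_succ]

lemma eA_eq (i : ℕ) :
    eA r n R q i =
      ⅟(r : R) • ∑ s ∈ Finset.range r, tA r n R q i ^ s * tA r n R q (i + 1) ^ (r - s) := by
  simp only [eA, eF, map_smul, map_sum, map_mul, map_pow, tA]

lemma gsqA {i : ℕ} (h1 : 1 ≤ i) (h2 : i ≤ n - 1) :
    gA r n R q i ^ 2 = 1 + qd R q • (eA r n R q i * gA r n R q i) := by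
  simpa only [map_pow, map_add, map_one, map_smul, map_mul, gA, eA] using
    rel_eq r n R q (Rel.gsq h1 h2)

lemma sum_pow_swap {S : Type*} [Ring S] {a b : S} (hc : a * b = b * a)
    (ha : a ^ r = 1) (hb : b ^ r = 1) :
    ∑ s ∈ Finset.range r, b ^ s * a ^ (r - s)
      = ∑ s ∈ Finset.range r, a ^ s * b ^ (r - s) := by
  rcases Nat.eq_zero_or_pos r with rfl | hr
  · simp
  have hcomm : Commute a b := hc
  have h1 : ∀ s ∈ Finset.range r,
      b ^ s * a ^ (r - s)
        = a ^ (if s = 0 then 0 else r - s) * b ^ (r - (if s = 0 then 0 else r - s)) := by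
    intro s hs
    rw [Finset.mem_range] at hs
    split_ifs with h
    · subst h; simp [ha, hb]
    · rw [Nat.sub_sub_self hs.le]
      exact ((hcomm.pow_pow (r - s) s).eq).symm
  rw [Finset.sum_congr rfl h1]
  refine Finset.sum_nbij' (fun s => if s = 0 then 0 else r - s)
    (fun s => if s = 0 then 0 else r - s) ?_ ?_ ?_ ?_ ?_
  · intro s hs; rw [Finset.mem_range] at hs ⊢; split_ifs <;> omega
  · intro s hs; rw [Finset.mem_range] at hs ⊢; split_ifs <;> omega
  · intro s hs; rw [Finset.mem_range] at hs; split_ifs <;> omega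
  · intro s hs; rw [Finset.mem_range] at hs; split_ifs <;> omega
  · intro s hs; rfl

lemma sum_pow_shift {S : Type*} [Ring S] {a b : S} (hc : a * b = b * a)
    (ha : a ^ r = 1) (hb : b ^ r = 1) :
    (∑ s ∈ Finset.range r, a ^ s * b ^ (r - s)) * a
      = (∑ s ∈ Finset.range r, a ^ s * b ^ (r - s)) * b := by
  have hcomm : Commute a b := hc
  rw [Finset.sum_mul, Finset.sum_mul]
  have hL : ∀ s ∈ Finset.range r,
      a ^ s * b ^ (r - s) * a = a ^ (s + 1) * b ^ (r + 1 - (s + 1)) := by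
    intro s hs
    rw [Finset.mem_range] at hs
    have hcoef : r + 1 - (s + 1) = r - s := by omega
    rw [hcoef, mul_assoc, ← (hcomm.pow_right (r - s)).eq, ← mul_assoc, ← pow_succ]
  have hR : ∀ s ∈ Finset.range r,
      a ^ s * b ^ (r - s) * b = a ^ s * b ^ (r + 1 - s) := by
    intro s hs
    rw [Finset.mem_range] at hs
    have hcoef : r + 1 - s = (r - s) + 1 := by omega
    rw [hcoef, mul_assoc, ← pow_succ]
  rw [Finset.sum_congr rfl hL, Finset.sum_congr rfl hR]
  have h0 : a ^ 0 * b ^ (r + 1 - 0) = b := by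
    rw [pow_zero, one_mul, Nat.sub_zero, pow_succ, hb, one_mul]
  have hrr : a ^ r * b ^ (r + 1 - r) = b := by
    rw [ha, one_mul, show r + 1 - r = 1 by omega, pow_one]
  have e1 := (Finset.sum_range_succ' (fun u => a ^ u * b ^ (r + 1 - u)) r).symm.trans
    (Finset.sum_range_succ (fun u => a ^ u * b ^ (r + 1 - u)) r)
  rw [h0, hrr] at e1
  exact add_right_cancel e1

lemma t_eA {i j : ℕ} (h1 : 1 ≤ i) (h2 : i ≤ n - 1) (h3 : 1 ≤ j) (h4 : j ≤ n) :
    tA r n R q j * eA r n R q i = eA r n R q i * tA r n R q j := by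
  rw [eA_eq, mul_smul_comm, smul_mul_assoc]
  congr 1
  rw [Finset.mul_sum, Finset.sum_mul]
  refine Finset.sum_congr rfl fun s _ => ?_
  have c1 : Commute (tA r n R q j) (tA r n R q i) := ttA r n R q h3 h4 h1 (by omega)
  have c2 : Commute (tA r n R q j) (tA r n R q (i + 1)) := ttA r n R q h3 h4 (by omega) (by omega)
  exact ((c1.pow_right s).mul_right (c2.pow_right (r - s))).eq

lemma eA_t {i : ℕ} (h1 : 1 ≤ i) (h2 : i ≤ n - 1) :
    eA r n R q i * tA r n R q i = eA r n R q i * tA r n R q (i + 1) := by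
  rw [eA_eq, smul_mul_assoc, smul_mul_assoc]
  congr 1
  exact sum_pow_shift r (ttA r n R q h1 (by omega) (by omega) (by omega))
    (tpowA r n R q h1 (by omega)) (tpowA r n R q (by omega) (by omega))

lemma g_eA {i : ℕ} (h1 : 1 ≤ i) (h2 : i ≤ n - 1) :
    gA r n R q i * eA r n R q i = eA r n R q i * gA r n R q i := by
  have hi : i ≤ n := by omega
  have hi1 : i + 1 ≤ n := by omega
  have hsig1 : sig i i = i + 1 := by unfold sig; simp
  have hsig2 : sig i (i + 1) = i := by unfold sig; split_ifs <;> omega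
  rw [eA_eq, mul_smul_comm, smul_mul_assoc]
  congr 1
  rw [Finset.mul_sum, Finset.sum_mul]
  have hterm : ∀ s ∈ Finset.range r,
      gA r n R q i * (tA r n R q i ^ s * tA r n R q (i + 1) ^ (r - s))
        = tA r n R q (i + 1) ^ s * tA r n R q i ^ (r - s) * gA r n R q i := by
    intro s _
    rw [← mul_assoc, g_tpow r n R q h1 h2 h1 hi s, hsig1, mul_assoc,
      g_tpow r n R q h1 h2 (by omega) hi1 (r - s), hsig2, ← mul_assoc]
  rw [Finset.sum_congr rfl hterm, ← Finset.sum_mul, ← Finset.sum_mul,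
    sum_pow_swap r (ttA r n R q h1 hi (by omega) hi1) (tpowA r n R q h1 hi)
      (tpowA r n R q (by omega) hi1)]

lemma g_eA_far {i k : ℕ} (h1 : 1 ≤ i) (h2 : i ≤ n - 1) (h3 : 1 ≤ k) (h4 : k + 1 ≤ n)
    (hfar : k + 1 < i ∨ i + 1 < k) :
    gA r n R q i * eA r n R q k = eA r n R q k * gA r n R q i := by
  have hk : sig i k = k := by unfold sig; split_ifs <;> omega
  have hk1 : sig i (k + 1) = k + 1 := by unfold sig; split_ifs <;> omega
  rw [eA_eq, mul_smul_comm, smul_mul_assoc]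
  congr 1
  rw [Finset.mul_sum, Finset.sum_mul]
  refine Finset.sum_congr rfl fun s _ => ?_
  rw [← mul_assoc, g_tpow r n R q h1 h2 h3 (by omega) s, hk, mul_assoc,
    g_tpow r n R q h1 h2 (by omega) h4 (r - s), hk1, ← mul_assoc]

lemma g_ginvA {i : ℕ} (h1 : 1 ≤ i) (h2 : i ≤ n - 1) :
    gA r n R q i * ginvA r n R q i = 1 := by
  unfold ginvA
  rw [mul_sub, mul_smul_comm, g_eA r n R q h1 h2, ← pow_two, gsqA r n R q h1 h2,
    add_sub_cancel_right]

lemma ginv_gA {i : ℕ} (h1 : 1 ≤ i) (h2 : i ≤ n - 1) :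
    ginvA r n R q i * gA r n R q i = 1 := by
  unfold ginvA
  rw [sub_mul, smul_mul_assoc, ← pow_two, gsqA r n R q h1 h2, add_sub_cancel_right]

lemma t_ginvA {i j : ℕ} (h1 : 1 ≤ i) (h2 : i ≤ n - 1) (h3 : 1 ≤ j) (h4 : j ≤ n) :
    tA r n R q j * ginvA r n R q i = ginvA r n R q i * tA r n R q (sig i j) := by
  have het : eA r n R q i * tA r n R q j = eA r n R q i * tA r n R q (sig i j) := by
    rcases eq_or_ne j i with rfl | hji
    · rw [show sig j j = j + 1 by unfold sig; simp]
      exact eA_t r n R q h1 h2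
    rcases eq_or_ne j (i + 1) with rfl | hji1
    · rw [show sig i (i + 1) = i by unfold sig; split_ifs <;> omega]
      exact (eA_t r n R q h1 h2).symm
    · rw [show sig i j = j by unfold sig; split_ifs <;> omega]
  calc tA r n R q j * ginvA r n R q i
      = tA r n R q j * gA r n R q i - qd R q • (tA r n R q j * eA r n R q i) := by
        unfold ginvA; rw [mul_sub, mul_smul_comm]
    _ = gA r n R q i * tA r n R q (sig i j) - qd R q • (eA r n R q i * tA r n R q (sig i j)) := by
        rw [tgA r n R q h1 h2 h3 h4, t_eA r n R q h1 h2 h3 h4, het]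
    _ = ginvA r n R q i * tA r n R q (sig i j) := by
        unfold ginvA; rw [sub_mul, smul_mul_assoc]

lemma ggA_far {i k : ℕ} (h1 : 1 ≤ i) (h2 : i + 2 ≤ k) (h3 : k ≤ n - 1) :
    gA r n R q i * gA r n R q k = gA r n R q k * gA r n R q i := by
  simpa only [map_mul, gA] using rel_eq r n R q (Rel.gg h1 h2 h3)

lemma g_ginvA_far {i k : ℕ} (h1 : 1 ≤ i) (h2 : i ≤ n - 1) (h3 : 1 ≤ k) (h4 : k ≤ n - 1)
    (hfar : i + 2 ≤ k ∨ k + 2 ≤ i) :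
    gA r n R q i * ginvA r n R q k = ginvA r n R q k * gA r n R q i := by
  have hg : gA r n R q i * gA r n R q k = gA r n R q k * gA r n R q i :=
    hfar.elim (fun h => ggA_far r n R q h1 h h4) (fun h => (ggA_far r n R q h3 h h2).symm)
  have he : gA r n R q i * eA r n R q k = eA r n R q k * gA r n R q i :=
    g_eA_far r n R q h1 h2 h3 (by omega) (by omega)
  unfold ginvA
  rw [mul_sub, sub_mul, mul_smul_comm, smul_mul_assoc, hg, he]

lemma braidA {i : ℕ} (h1 : 1 ≤ i) (h2 : i + 1 ≤ n - 1) :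
    gA r n R q i * gA r n R q (i + 1) * gA r n R q i
      = gA r n R q (i + 1) * gA r n R q i * gA r n R q (i + 1) := by
  simpa only [map_mul, gA] using rel_eq r n R q (Rel.braid h1 h2)

lemma aux_inv_braid {S : Type*} [Monoid S] {a b a' b' : S}
    (haa' : a * a' = 1) (ha'a : a' * a = 1) (hbb' : b * b' = 1) (hb'b : b' * b = 1)
    (hbr : a * b * a = b * a * b) : a' * b' * a' = b' * a' * b' := by
  refine left_inv_eq_right_inv (a := a * b * a) ?_ ?_
  · calc a' * b' * a' * (a * b * a)
        = a' * (b' * ((a' * a) * (b * a))) := by simp only [mul_assoc]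
      _ = a' * ((b' * b) * a) := by rw [ha'a, one_mul]; simp only [mul_assoc]
      _ = a' * a := by rw [hb'b, one_mul]
      _ = 1 := ha'a
  · rw [hbr]
    calc b * a * b * (b' * a' * b')
        = b * (a * ((b * b') * (a' * b'))) := by simp only [mul_assoc]
      _ = b * ((a * a') * b') := by rw [hbb', one_mul]; simp only [mul_assoc]
      _ = b * b' := by rw [haa', one_mul]
      _ = 1 := hbb'

lemma aux_star {S : Type*} [Monoid S] {a b a' b' : S}
    (ha'a : a' * a = 1) (hbb' : b * b' = 1)
    (hib : a' * b' * a' = b' * a' * b') :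
    b * a' * b' = a' * b' * a := by
  calc b * a' * b'
      = b * (a' * b' * (a' * a)) := by rw [ha'a, mul_one]; simp only [mul_assoc]
    _ = b * ((a' * b' * a') * a) := by simp only [mul_assoc]
    _ = b * ((b' * a' * b') * a) := by rw [hib]
    _ = (b * b') * (a' * (b' * a)) := by simp only [mul_assoc]
    _ = a' * (b' * a) := by rw [hbb', one_mul]
    _ = a' * b' * a := by simp only [mul_assoc]

lemma g_ginv_starA {i : ℕ} (h1 : 1 ≤ i) (h2 : i + 1 ≤ n - 1) :
    gA r n R q (i + 1) * ginvA r n R q i * ginvA r n R q (i + 1)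
      = ginvA r n R q i * ginvA r n R q (i + 1) * gA r n R q i := by
  refine aux_star (ginv_gA r n R q h1 (by omega)) (g_ginvA r n R q (by omega) h2) ?_
  exact aux_inv_braid (g_ginvA r n R q h1 (by omega)) (ginv_gA r n R q h1 (by omega))
    (g_ginvA r n R q (by omega) h2) (ginv_gA r n R q (by omega) h2)
    (braidA r n R q h1 h2)

lemma t_XA {j : ℕ} (h3 : 1 ≤ j) (h4 : j ≤ n) :
    Commute (tA r n R q j) (XA r n R q 1) := by
  have h := rel_eq r n R q (Rel.tX h3 h4)
  simp only [map_mul] at h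
  exact h

lemma g_XA {i : ℕ} (h1 : 2 ≤ i) (h2 : i ≤ n - 1) :
    Commute (gA r n R q i) (XA r n R q 1) := by
  have h := rel_eq r n R q (Rel.gX h1 h2)
  simp only [map_mul] at h
  exact h

lemma comm_f1A {x : AYH r n R q} (hX : Commute x (XA r n R q 1)) :
    Commute x (f1A r n d R q v) := by
  unfold f1A
  apply Commute.list_prod_right
  intro y hy
  simp only [List.mem_map, List.mem_range] at hy
  obtain ⟨l, -, rfl⟩ := hy
  exact hX.sub_right (Algebra.commutes ((v l : R)) x).symm

lemma aux_t {S : Type*} [Semiring S] {b f b' t t' : S} (h1 : t * b = b * t')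
    (h2 : t' * f = f * t') (h3 : t' * b' = b' * t) :
    t * (b * f * b') = b * f * b' * t := by
  calc t * (b * f * b') = (t * b) * (f * b') := by simp only [mul_assoc]
    _ = b * ((t' * f) * b') := by rw [h1]; simp only [mul_assoc]
    _ = b * (f * (t' * b')) := by rw [h2]; simp only [mul_assoc]
    _ = b * f * b' * t := by rw [h3]; simp only [mul_assoc]

lemma aux_h {S : Type*} [Semiring S] {a b f a' b' : S}
    (hbr : a * b * a = b * a * b) (hfar : b * f = f * b)
    (hstar : b * a' * b' = a' * b' * a) :
    a * (b * (a * f * a') * b') = b * (a * f * a') * b' * a := by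
  calc a * (b * (a * f * a') * b')
      = (a * b * a) * f * (a' * b') := by simp only [mul_assoc]
    _ = (b * a * b) * f * (a' * b') := by rw [hbr]
    _ = (b * a) * (b * f) * (a' * b') := by simp only [mul_assoc]
    _ = (b * a) * (f * b) * (a' * b') := by rw [hfar]
    _ = ((b * a) * f) * (b * a' * b') := by simp only [mul_assoc]
    _ = ((b * a) * f) * (a' * b' * a) := by rw [hstar]
    _ = b * (a * f * a') * b' * a := by simp only [mul_assoc]

lemma t_fA : ∀ k, k ≤ n → ∀ j, 1 ≤ j → j ≤ n →
    tA r n R q j * fA r n d R q v k = fA r n d R q v k * tA r n R q j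
  | 0 => fun _ j _ _ => by
      rw [show fA r n d R q v 0 = 1 from rfl, mul_one, one_mul]
  | 1 => fun _ j h3 h4 => (comm_f1A r n d R q v (t_XA r n R q h3 h4)).eq
  | (m + 2) => fun hk j h3 h4 => by
      have h1 : 1 ≤ m + 1 := by omega
      have h2 : m + 1 ≤ n - 1 := by omega
      obtain ⟨hs1, hs2⟩ := sig_bounds (n := n) h1 h2 h3 h4
      have hfa : fA r n d R q v (m + 2)
          = gA r n R q (m + 1) * fA r n d R q v (m + 1) * gA r n R q (m + 1) := rfl
      rw [hfa]
      refine aux_t (tgA r n R q h1 h2 h3 h4) (t_fA (m + 1) (by omega) _ hs1 hs2) ?_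
      have h := tgA r n R q h1 h2 hs1 hs2
      rwa [sig_sig] at h

lemma t_hA : ∀ k, k ≤ n → ∀ j, 1 ≤ j → j ≤ n →
    tA r n R q j * hA r n d R q v k = hA r n d R q v k * tA r n R q j
  | 0 => fun _ j _ _ => by
      rw [show hA r n d R q v 0 = 1 from rfl, mul_one, one_mul]
  | 1 => fun _ j h3 h4 => (comm_f1A r n d R q v (t_XA r n R q h3 h4)).eq
  | (m + 2) => fun hk j h3 h4 => by
      have h1 : 1 ≤ m + 1 := by omega
      have h2 : m + 1 ≤ n - 1 := by omega
      obtain ⟨hs1, hs2⟩ := sig_bounds (n := n) h1 h2 h3 h4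
      have hfa : hA r n d R q v (m + 2)
          = gA r n R q (m + 1) * hA r n d R q v (m + 1) * ginvA r n R q (m + 1) := rfl
      rw [hfa]
      refine aux_t (tgA r n R q h1 h2 h3 h4) (t_hA (m + 1) (by omega) _ hs1 hs2) ?_
      have h := t_ginvA r n R q h1 h2 hs1 hs2
      rwa [sig_sig] at h

lemma g_fA_far : ∀ k i, k + 1 ≤ i → i ≤ n - 1 →
    gA r n R q i * fA r n d R q v k = fA r n d R q v k * gA r n R q i
  | 0 => fun i _ _ => by
      rw [show fA r n d R q v 0 = 1 from rfl, mul_one, one_mul]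
  | 1 => fun i hi hi2 => (comm_f1A r n d R q v (g_XA r n R q (by omega) hi2)).eq
  | (m + 2) => fun i hi hi2 => by
      have hfa : fA r n d R q v (m + 2)
          = gA r n R q (m + 1) * fA r n d R q v (m + 1) * gA r n R q (m + 1) := rfl
      have hgg : gA r n R q i * gA r n R q (m + 1) = gA r n R q (m + 1) * gA r n R q i :=
        (ggA_far r n R q (by omega) (by omega) hi2).symm
      have ihf := g_fA_far (m + 1) i (by omega) hi2
      rw [hfa]
      exact aux_t hgg ihf hgg

lemma g_hA_far : ∀ k i, k + 1 ≤ i → i ≤ n - 1 →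
    gA r n R q i * hA r n d R q v k = hA r n d R q v k * gA r n R q i
  | 0 => fun i _ _ => by
      rw [show hA r n d R q v 0 = 1 from rfl, mul_one, one_mul]
  | 1 => fun i hi hi2 => (comm_f1A r n d R q v (g_XA r n R q (by omega) hi2)).eq
  | (m + 2) => fun i hi hi2 => by
      have hfa : hA r n d R q v (m + 2)
          = gA r n R q (m + 1) * hA r n d R q v (m + 1) * ginvA r n R q (m + 1) := rfl
      have hgg : gA r n R q i * gA r n R q (m + 1) = gA r n R q (m + 1) * gA r n R q i :=
        (ggA_far r n R q (by omega) (by omega) hi2).symm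
      have hgi : gA r n R q i * ginvA r n R q (m + 1) = ginvA r n R q (m + 1) * gA r n R q i :=
        g_ginvA_far r n R q (by omega) hi2 (by omega) (by omega) (Or.inr (by omega))
      have ihf := g_hA_far (m + 1) i (by omega) hi2
      rw [hfa]
      exact aux_t hgg ihf hgi

lemma g_fA_near : ∀ k, k ≤ n → ∀ i, 1 ≤ i → i + 2 ≤ k →
    gA r n R q i * fA r n d R q v k = fA r n d R q v k * gA r n R q i
  | 0 => fun _ i h1 h2 => absurd h2 (by omega)
  | 1 => fun _ i h1 h2 => absurd h2 (by omega)
  | 2 => fun _ i h1 h2 => absurd h2 (by omega)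
  | (m + 3) => fun hk i h1 h2 => by
      have hfa : fA r n d R q v (m + 3)
          = gA r n R q (m + 2) * fA r n d R q v (m + 2) * gA r n R q (m + 2) := rfl
      rcases Nat.lt_or_ge i (m + 1) with hc | hc
      · have ihf := g_fA_near (m + 2) (by omega) i h1 (by omega)
        have hgg : gA r n R q i * gA r n R q (m + 2) = gA r n R q (m + 2) * gA r n R q i :=
          ggA_far r n R q h1 (by omega) (by omega)
        rw [hfa]
        exact aux_t hgg ihf hgg
      · obtain rfl : i = m + 1 := by omega
        have hfb : fA r n d R q v (m + 2)
            = gA r n R q (m + 1) * fA r n d R q v (m + 1) * gA r n R q (m + 1) := rfl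
        rw [hfa, hfb]
        exact aux_h (braidA r n R q h1 (by omega))
          (g_fA_far r n d R q v (m + 1) (m + 2) (by omega) (by omega))
          (braidA r n R q h1 (by omega)).symm

lemma g_hA_near : ∀ k, k ≤ n → ∀ i, 1 ≤ i → i + 2 ≤ k →
    gA r n R q i * hA r n d R q v k = hA r n d R q v k * gA r n R q i
  | 0 => fun _ i h1 h2 => absurd h2 (by omega)
  | 1 => fun _ i h1 h2 => absurd h2 (by omega)
  | 2 => fun _ i h1 h2 => absurd h2 (by omega)
  | (m + 3) => fun hk i h1 h2 => by
      have hfa : hA r n d R q v (m + 3)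
          = gA r n R q (m + 2) * hA r n d R q v (m + 2) * ginvA r n R q (m + 2) := rfl
      rcases Nat.lt_or_ge i (m + 1) with hc | hc
      · have ihf := g_hA_near (m + 2) (by omega) i h1 (by omega)
        have hgg : gA r n R q i * gA r n R q (m + 2) = gA r n R q (m + 2) * gA r n R q i :=
          ggA_far r n R q h1 (by omega) (by omega)
        have hgi : gA r n R q i * ginvA r n R q (m + 2)
            = ginvA r n R q (m + 2) * gA r n R q i :=
          g_ginvA_far r n R q h1 (by omega) (by omega) (by omega) (Or.inl (by omega))
        rw [hfa]
        exact aux_t hgg ihf hgi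
      · obtain rfl : i = m + 1 := by omega
        have hfb : hA r n d R q v (m + 2)
            = gA r n R q (m + 1) * hA r n d R q v (m + 1) * ginvA r n R q (m + 1) := rfl
        rw [hfa, hfb]
        exact aux_h (braidA r n R q h1 (by omega))
          (g_hA_far r n d R q v (m + 1) (m + 2) (by omega) (by omega))
          (g_ginv_starA r n R q h1 (by omega))

lemma comm_Ysub {x : AYH r n R q} (hx : x ∈ Ysub r n R q (n - 1)) :
    x * fA r n d R q v n = fA r n d R q v n * x ∧
    x * hA r n d R q v n = hA r n d R q v n * x := by
  induction hx using Algebra.adjoin_induction with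
  | mem y hy =>
    rcases hy with ⟨i, h1, h2, rfl⟩ | ⟨i, h1, h2, rfl⟩
    · exact ⟨t_fA r n d R q v n le_rfl i h1 (by omega),
        t_hA r n d R q v n le_rfl i h1 (by omega)⟩
    · exact ⟨g_fA_near r n d R q v n le_rfl i h1 (by omega),
        g_hA_near r n d R q v n le_rfl i h1 (by omega)⟩
  | algebraMap c =>
    exact ⟨Algebra.commutes c _, Algebra.commutes c _⟩
  | add a b _ _ iha ihb =>
    exact ⟨by rw [add_mul, iha.1, ihb.1, mul_add], by rw [add_mul, iha.2, ihb.2, mul_add]⟩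
  | mul a b _ _ iha ihb =>
    constructor
    · rw [mul_assoc, ihb.1, ← mul_assoc, iha.1, mul_assoc]
    · rw [mul_assoc, ihb.2, ← mul_assoc, iha.2, mul_assoc]

lemma Ysub_mono : Ysub r n R q (n - 1) ≤ Ysub r n R q n := by
  apply Algebra.adjoin_mono
  rintro x (⟨i, h1, h2, rfl⟩ | ⟨i, h1, h2, rfl⟩)
  · exact Set.mem_union_left _ ⟨i, h1, by omega, rfl⟩
  · exact Set.mem_union_right _ ⟨i, h1, by omega, rfl⟩


/-- For `n ≥ 1`, `Y_{r,n-1} f_n Y_{r,n} = f_n Y_{r,n}` and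
`Y_{r,n-1} h_n Y_{r,n} = h_n Y_{r,n}` as `R`-submodules of `Ŷ_{r,n}`. -/
theorem Y_f_Y_eq_f_Y
    (r n d : ℕ) (hr : 1 ≤ r) (hn : 1 ≤ n) (hd : 1 ≤ d)
    (R : Type) [CommRing R] [Invertible (r : R)] (q : Rˣ) (v : ℕ → Rˣ) :
    Submodule.span R {x : AYH r n R q | ∃ a ∈ Ysub r n R q (n - 1), ∃ b ∈ Ysub r n R q n,
        x = a * fA r n d R q v n * b} =
      Submodule.span R {x : AYH r n R q | ∃ b ∈ Ysub r n R q n, x = fA r n d R q v n * b} ∧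
    Submodule.span R {x : AYH r n R q | ∃ a ∈ Ysub r n R q (n - 1), ∃ b ∈ Ysub r n R q n,
        x = a * hA r n d R q v n * b} =
      Submodule.span R {x : AYH r n R q | ∃ b ∈ Ysub r n R q n, x = hA r n d R q v n * b} := by
  have key : ∀ Fel : AYH r n R q,
      (∀ x ∈ Ysub r n R q (n - 1), x * Fel = Fel * x) →
      Submodule.span R {x : AYH r n R q | ∃ a ∈ Ysub r n R q (n - 1), ∃ b ∈ Ysub r n R q n,
          x = a * Fel * b} =
        Submodule.span R {x : AYH r n R q | ∃ b ∈ Ysub r n R q n, x = Fel * b} := by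
    intro Fel hF
    have hset : {x : AYH r n R q | ∃ a ∈ Ysub r n R q (n - 1), ∃ b ∈ Ysub r n R q n,
        x = a * Fel * b} = {x : AYH r n R q | ∃ b ∈ Ysub r n R q n, x = Fel * b} := by
      ext x
      simp only [Set.mem_setOf_eq]
      constructor
      · rintro ⟨a, ha, b, hb, rfl⟩
        exact ⟨a * b, mul_mem (Ysub_mono r n R q ha) hb, by rw [hF a ha, mul_assoc]⟩
      · rintro ⟨b, hb, rfl⟩
        exact ⟨1, one_mem _, b, hb, by rw [one_mul]⟩
    rw [hset]
  exact ⟨key _ fun x hx => (comm_Ysub r n d R q v hx).1,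
    key _ fun x hx => (comm_Ysub r n d R q v hx).2⟩

end YH
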